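/- arXiv:1701.02228 — 2 statements merged into one kernel-verified Lean document; each statement's English description precedes it below -/
import Mathlib

section
/- Let X and Y be independent random variables such that (X, Y) has a spherically symmetric distribution in R^2. Then P(X = 0) is either 0 or 1. -/
/-!
Rotating `(X, Y)` so that the line `a X + b Y = 0` becomes the axis `X = 0` shows that every
line through the origin carries the same mass `p = P(X = 0)`. The lines `X = t Y` are disjoint
away from the origin, so one of them carries no mass off the origin; its mass is then
`P(X = 0, Y = 0) = p²` by independence, whence `p = p²`.
-/

open MeasureTheory

/-- A random vector `X` taking values in `ℝⁿ` is spherically symmetric (w.r.t. `μ`) if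
`X` and `H ⬝ X` are identically distributed for every `n × n` real orthogonal matrix `H`. -/
def SphericallySymmetric {Ω : Type*} [MeasurableSpace Ω] (μ : Measure Ω)
    {n : ℕ} (X : Ω → Fin n → ℝ) : Prop :=
  ∀ H : Matrix (Fin n) (Fin n) ℝ, H ∈ Matrix.orthogonalGroup (Fin n) ℝ →
    Measure.map (fun ω => H.mulVec (X ω)) μ = Measure.map X μ

section

variable {Ω : Type*} [MeasurableSpace Ω] {μ : Measure Ω}

lemma SphericallySymmetric.measure_preimage_mulVec {n : ℕ} {Z : Ω → Fin n → ℝ}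
    (hsym : SphericallySymmetric μ Z) (hZ : Measurable Z) {H : Matrix (Fin n) (Fin n) ℝ}
    (hH : H ∈ Matrix.orthogonalGroup (Fin n) ℝ) {S : Set (Fin n → ℝ)} (hS : MeasurableSet S) :
    μ ((fun ω => H.mulVec (Z ω)) ⁻¹' S) = μ (Z ⁻¹' S) := by
  rw [← Measure.map_apply (by fun_prop) hS, hsym H hH, Measure.map_apply hZ hS]

lemma SphericallySymmetric.measure_line_eq_measure_axis {X Y : Ω → ℝ}
    (hsym : SphericallySymmetric μ (fun ω => ![X ω, Y ω])) (hX : Measurable X)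
    (hY : Measurable Y) {a b : ℝ} (hab : a ≠ 0 ∨ b ≠ 0) :
    μ {ω | a * X ω + b * Y ω = 0} = μ {ω | X ω = 0} := by
  have hpos : 0 < a ^ 2 + b ^ 2 := by rcases hab with h | h <;> positivity
  set r := √(a ^ 2 + b ^ 2)
  have hr : 0 < r := Real.sqrt_pos.2 hpos
  have hunit : (a / r) ^ 2 + (b / r) ^ 2 = 1 := by
    rw [div_pow, div_pow, ← add_div, Real.sq_sqrt hpos.le, div_self hpos.ne']
  have hH : !![a / r, b / r; -(b / r), a / r] ∈ Matrix.orthogonalGroup (Fin 2) ℝ :=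
    (Matrix.of_mem_specialOrthogonalGroup_fin_two_iff.2 ⟨rfl, (neg_neg _).symm, hunit⟩).1
  have hXY : Measurable fun ω => ![X ω, Y ω] := by
    rw [measurable_pi_iff]
    intro i
    fin_cases i <;> simpa
  have key := hsym.measure_preimage_mulVec hXY hH
    (measurable_pi_apply (0 : Fin 2) (measurableSet_singleton (0 : ℝ)))
  convert key using 2 <;> ext ω
  · have hcomb : X ω * (a / r) + Y ω * (b / r) = (a * X ω + b * Y ω) / r := by ring
    simp [hcomb, hr.ne']
  · simp

lemma exists_measure_eq_mul_eq_measure_inter [SFinite μ] {X Y : Ω → ℝ} (hX : Measurable X)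
    (hY : Measurable Y) :
    ∃ t : ℝ, μ {ω | X ω = t * Y ω} = μ ({ω | X ω = 0} ∩ {ω | Y ω = 0}) := by
  have hcount := Measure.countable_meas_level_set_pos (μ := μ) (hX.div hY)
  obtain ⟨t, ht⟩ : ∃ t : ℝ, ¬ 0 < μ {ω | X ω / Y ω = t} := by
    by_contra! h
    exact Set.not_countable_univ (hcount.mono fun t _ => h t)
  refine ⟨t, ?_⟩
  -- off `Y = 0`, the line `X = t Y` lies in the null level set `X / Y = t`
  have hnull : μ ({ω | X ω = t * Y ω} \ {ω | Y ω = 0}) = 0 :=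
    measure_mono_null (fun ω ⟨hxt, hy⟩ => by simp_all) (not_lt.1 ht |>.antisymm bot_le)
  have hon : {ω | X ω = t * Y ω} ∩ {ω | Y ω = 0} = {ω | X ω = 0} ∩ {ω | Y ω = 0} := by
    ext ω
    simp +contextual
  rw [← measure_inter_add_sdiff _ (measurableSet_eq_fun hY measurable_const), hnull, add_zero, hon]

end

lemma ENNReal.eq_zero_or_one_of_mul_self {p : ENNReal} (hp : p ≠ ⊤) (h : p * p = p) :
    p = 0 ∨ p = 1 := by
  by_cases h0 : p = 0
  · exact .inl h0
  · exact .inr ((ENNReal.mul_eq_left h0 hp).1 h)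

theorem stmt_6 {Ω : Type*} [MeasurableSpace Ω] (μ : Measure Ω) [IsProbabilityMeasure μ]
    (X Y : Ω → ℝ) (hX : Measurable X) (hY : Measurable Y)
    (hindep : ProbabilityTheory.IndepFun X Y μ)
    (hsym : SphericallySymmetric μ (fun ω => ![X ω, Y ω])) :
    μ {ω | X ω = 0} = 0 ∨ μ {ω | X ω = 0} = 1 := by
  have hYX : μ {ω | Y ω = 0} = μ {ω | X ω = 0} := by
    simpa using hsym.measure_line_eq_measure_axis hX hY (a := 0) (b := 1) (by simp)
  obtain ⟨t, ht⟩ := exists_measure_eq_mul_eq_measure_inter (μ := μ) hX hY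
  refine ENNReal.eq_zero_or_one_of_mul_self (measure_ne_top _ _) ?_
  calc μ {ω | X ω = 0} * μ {ω | X ω = 0}
      = μ {ω | X ω = 0} * μ {ω | Y ω = 0} := by rw [hYX]
    _ = μ ({ω | X ω = 0} ∩ {ω | Y ω = 0}) :=
      (hindep.measure_inter_preimage_eq_mul _ _ (measurableSet_singleton 0)
        (measurableSet_singleton 0)).symm
    _ = μ {ω | X ω = t * Y ω} := ht.symm
    _ = μ {ω | X ω = 0} := by
      simpa [← sub_eq_add_neg, sub_eq_zero] using
        hsym.measure_line_eq_measure_axis hX hY (a := 1) (b := -t) (by simp)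
end

section
/- Let φ: R → C be a characteristic function (of some real random variable) satisfying φ(s)φ(t) = φ(√(s² + t²)) for all s, t ∈ R. Then φ(t) > 0 for all t ∈ R (in particular φ is real-valued and strictly positive). -/
/-! Since `φ(-t) = conj φ(t)` and the functional equation gives `φ(t) φ(t) = φ(-t) φ(t)`, `φ` is
real and even, hence `φ(t) = φ(t/√2)²` is nonnegative. A zero at `t` would propagate to zeros at
`t/√2ⁿ → 0`, contradicting `φ(0) = 1` and continuity. -/

open MeasureTheory Filter Topology ComplexConjugate

section FunctionalEquation

variable {φ : ℝ → ℂ}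

lemma im_eq_zero_of_mul_eq_sqrt (heq : ∀ s t : ℝ, φ s * φ t = φ (√(s ^ 2 + t ^ 2)))
    (hconj : ∀ s, φ (-s) = conj (φ s)) (s : ℝ) : (φ s).im = 0 := by
  have hsym : φ s * φ s = conj (φ s) * φ s := by
    rw [← hconj, heq, heq, neg_sq]
  have hre := congrArg Complex.re hsym
  simp only [Complex.mul_re, Complex.conj_re, Complex.conj_im] at hre
  nlinarith

lemma sq_div_sqrt_two_of_mul_eq_sqrt (heq : ∀ s t : ℝ, φ s * φ t = φ (√(s ^ 2 + t ^ 2)))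
    (heven : ∀ s, φ (-s) = φ s) (t : ℝ) :
    φ (t / √2) ^ 2 = φ t := by
  have harg : (t / √2) ^ 2 + (t / √2) ^ 2 = t ^ 2 := by
    rw [div_pow, Real.sq_sqrt zero_le_two]
    ring
  rw [sq, heq, harg, Real.sqrt_sq_eq_abs]
  rcases abs_choice t with h | h <;> rw [h]
  exact heven t

end FunctionalEquation

lemma pos_of_sq_comp_div {ψ : ℝ → ℝ} (hψ : ContinuousAt ψ 0) (h0 : ψ 0 ≠ 0) {c : ℝ}
    (hc : 1 < c) (hsq : ∀ t, ψ (t / c) ^ 2 = ψ t) (t : ℝ) : 0 < ψ t := by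
  refine (hsq t ▸ sq_nonneg _).lt_of_ne' fun ht ↦ h0 ?_
  have hzero : ∀ n : ℕ, ψ (t / c ^ n) = 0 := by
    intro n
    induction n with
    | zero => simpa using ht
    | succ n ih =>
      rw [pow_succ, ← div_div]
      exact (pow_eq_zero_iff two_ne_zero).mp ((hsq _).trans ih)
  have htend : Tendsto (fun n : ℕ ↦ t / c ^ n) atTop (𝓝 0) :=
    tendsto_const_nhds.div_atTop (tendsto_pow_atTop_atTop_of_one_lt hc)
  exact tendsto_nhds_unique (hψ.tendsto.comp htend) (by simp [Function.comp_def, hzero])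

theorem stmt_17 {Ω : Type*} [MeasurableSpace Ω] (μ : Measure Ω) [IsProbabilityMeasure μ]
    (X : Ω → ℝ) (hX : Measurable X) (φ : ℝ → ℂ)
    (hφ : ∀ t : ℝ, φ t = ∫ ω, Complex.exp (Complex.I * (t * X ω : ℝ)) ∂μ)
    (heq : ∀ s t : ℝ, φ s * φ t = φ (Real.sqrt (s ^ 2 + t ^ 2))) :
    ∀ t : ℝ, (φ t).im = 0 ∧ 0 < (φ t).re := by
  have hchar : φ = charFun (μ.map X) := funext fun t ↦ by
    rw [hφ, charFun_apply_real, integral_map hX.aemeasurable (by fun_prop)]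
    simp only [Complex.ofReal_mul, mul_comm Complex.I]
  have : IsProbabilityMeasure (μ.map X) := Measure.isProbabilityMeasure_map hX.aemeasurable
  have him := im_eq_zero_of_mul_eq_sqrt heq (by simp [hchar])
  have hreal : ∀ s, φ s = (φ s).re := fun s ↦ Complex.ext rfl (by simp [him])
  have heven : ∀ s, φ (-s) = φ s := by
    intro s
    rw [hchar, charFun_neg, ← hchar, hreal s, Complex.conj_ofReal]
  have hsq : ∀ t, (φ (t / √2)).re ^ 2 = (φ t).re := fun t ↦ by
    rw [← sq_div_sqrt_two_of_mul_eq_sqrt heq heven t, hreal (t / √2)]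
    norm_cast
  have hcont : Continuous fun s ↦ (φ s).re :=
    Complex.continuous_re.comp (hchar ▸ continuous_charFun)
  have h0 : (φ 0).re = 1 := by simp [hchar]
  exact fun t ↦ ⟨him t,
    pos_of_sq_comp_div hcont.continuousAt (h0 ▸ one_ne_zero) Real.one_lt_sqrt_two hsq t⟩
end
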